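/- Every function f : [0, 1) → ℝ belonging to 𝒯 satisfies all of the following: (i) f is right-continuous; (ii) there exist a finite set F ⊆ [0, 1) and an integer a such that f is differentiable at every point of [0, 1) \ F with derivative equal to a; (iii) for this integer a and all s, t ∈ [0, 1), the value f(t) − f(s) − a(t − s) is an integer; (iv) the integral of f over [0, 1) equals b/2 for some integer b with b ≡ a (mod 2). -/

import Mathlib

noncomputable section

open MeasureTheory

/-- The abelian group `𝒯` of functions generated by `t ↦ fract (t - a)` and
`t ↦ 1 - fract (t - a)` for `a ∈ [0, 1)`, realized as an additive subgroup of `ℝ → ℝ`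
(all its elements are periodic with period 1, hence determined by their values on `[0, 1)`). -/
def calT : AddSubgroup (ℝ → ℝ) :=
  AddSubgroup.closure {f : ℝ → ℝ | ∃ a ∈ Set.Ico (0:ℝ) 1,
    f = (fun t => Int.fract (t - a)) ∨ f = (fun t => 1 - Int.fract (t - a))}

/-- The inductive predicate: everything in the theorem, plus interval integrability. -/
def Good (f : ℝ → ℝ) : Prop :=
  IntervalIntegrable f volume 0 1 ∧
  (∀ t ∈ Set.Ico (0:ℝ) 1, ContinuousWithinAt f (Set.Ici t) t) ∧
  ∃ a : ℤ,
    (∃ F : Finset ℝ, (F : Set ℝ) ⊆ Set.Ico (0:ℝ) 1 ∧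
      ∀ t ∈ Set.Ico (0:ℝ) 1, t ∉ F → HasDerivAt f (a : ℝ) t) ∧
    (∀ s ∈ Set.Ico (0:ℝ) 1, ∀ t ∈ Set.Ico (0:ℝ) 1,
      ∃ k : ℤ, f t - f s - (a : ℝ) * (t - s) = (k : ℝ)) ∧
    (∃ b : ℤ, (2 : ℤ) ∣ (b - a) ∧ (∫ t in (0:ℝ)..1, f t) = (b : ℝ) / 2)

lemma fract_periodic : Function.Periodic Int.fract (1 : ℝ) :=
  fun x => Int.fract_add_one x

lemma fract_intervalIntegrable (c a b : ℝ) :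
    IntervalIntegrable (fun t => Int.fract (t - c)) volume a b := by
  rw [intervalIntegrable_iff]
  apply Measure.integrableOn_of_bounded (M := 1) measure_Ioc_lt_top.ne
  · exact (measurable_fract.comp (measurable_id.sub_const c)).aestronglyMeasurable
  · filter_upwards with x
    rw [Real.norm_eq_abs, abs_of_nonneg (Int.fract_nonneg _)]
    exact (Int.fract_lt_one _).le

lemma integral_fract (a : ℝ) : (∫ t in (0:ℝ)..1, Int.fract (t - a)) = 1 / 2 := by
  have h1 : (∫ t in (0:ℝ)..1, Int.fract (t - a)) = ∫ t in (0:ℝ)-a..(1:ℝ)-a, Int.fract t :=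
    intervalIntegral.integral_comp_sub_right Int.fract a
  have h2 : (∫ t in (0:ℝ)-a..(1:ℝ)-a, Int.fract t) = ∫ t in (0:ℝ)..(0:ℝ)+1, Int.fract t := by
    have := fract_periodic.intervalIntegral_add_eq (-a) 0
    simpa [sub_eq_add_neg, add_comm] using this
  have h3 : (∫ t in (0:ℝ)..1, Int.fract t) = ∫ t in (0:ℝ)..1, t := by
    apply intervalIntegral.integral_congr_ae
    have hne : ∀ᵐ x : ℝ ∂volume, x ≠ (1:ℝ) := by
      rw [Filter.Eventually, mem_ae_iff]
      simpa using measure_singleton (1:ℝ)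
    filter_upwards [hne] with x hx hmem
    rw [Set.uIoc_of_le (by norm_num : (0:ℝ) ≤ 1)] at hmem
    exact Int.fract_eq_self.mpr ⟨le_of_lt hmem.1, lt_of_le_of_ne hmem.2 hx⟩
  rw [h1, h2, zero_add, h3, integral_id]
  norm_num

lemma fract_contWithinAt (a t : ℝ) :
    ContinuousWithinAt (fun u => Int.fract (u - a)) (Set.Ici t) t := by
  by_cases h : t - a = (⌊t - a⌋ : ℝ)
  · have hsub : Filter.Tendsto (fun u : ℝ => u - a) (nhdsWithin t (Set.Ici t))
        (nhdsWithin (t - a) (Set.Ici (t - a))) := by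
      apply Filter.Tendsto.inf
      · exact (continuous_id.sub continuous_const).continuousAt
      · apply Filter.tendsto_principal_principal.mpr
        intro u hu
        exact sub_le_sub_right hu a
    have hfr := tendsto_fract_right' (α := ℝ) ⌊t - a⌋
    rw [← h] at hfr
    have h0 : Int.fract (t - a) = 0 := by
      rw [h, Int.fract_intCast]
    unfold ContinuousWithinAt
    show Filter.Tendsto _ _ (nhds (Int.fract (t - a)))
    rw [h0]
    exact hfr.comp hsub
  · have hc : ContinuousAt (fun u : ℝ => u - a) t :=
      (continuous_id.sub continuous_const).continuousAt
    have hcomp : ContinuousAt (Int.fract ∘ fun u : ℝ => u - a) t :=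
      ContinuousAt.comp (continuousAt_fract h) hc
    exact hcomp.continuousWithinAt

lemma fract_hasDerivAt {a t : ℝ} (h : ∀ n : ℤ, t - a ≠ (n : ℝ)) :
    HasDerivAt (fun u => Int.fract (u - a)) 1 t := by
  set n : ℤ := ⌊t - a⌋ with hn
  have h1 : HasDerivAt (fun u : ℝ => u - a - (n : ℝ)) 1 t :=
    ((hasDerivAt_id t).sub_const a).sub_const (n : ℝ)
  apply h1.congr_of_eventuallyEq
  have hmem : t ∈ Set.Ioo (a + (n : ℝ)) (a + (n : ℝ) + 1) := by
    constructor
    · have h1' := Int.floor_le (t - a)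
      have h2' := h n
      cases lt_or_eq_of_le h1' with
      | inl hlt => linarith
      | inr heq => exact absurd heq.symm h2'
    · have := Int.lt_floor_add_one (t - a)
      rw [← hn] at this
      push_cast
      linarith
  filter_upwards [Ioo_mem_nhds hmem.1 hmem.2] with u hu
  have hfl : ⌊u - a⌋ = n := by
    rw [Int.floor_eq_iff]
    constructor
    · linarith [hu.1]
    · push_cast; linarith [hu.2]
  rw [← Int.self_sub_floor (u - a), hfl]

lemma good_gen1 {a : ℝ} (ha : a ∈ Set.Ico (0:ℝ) 1) :
    Good (fun t => Int.fract (t - a)) := by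
  refine ⟨fract_intervalIntegrable a 0 1, fun t _ => fract_contWithinAt a t, 1, ?_, ?_, ?_⟩
  · refine ⟨{a}, ?_, ?_⟩
    · intro x hx
      simp only [Finset.coe_singleton, Set.mem_singleton_iff] at hx
      rw [hx]; exact ha
    · intro t ht htF
      have hne : ∀ n : ℤ, t - a ≠ (n : ℝ) := by
        intro n hn
        have h1 : -1 < (n : ℝ) := by
          rw [← hn]
          linarith [ht.1, ht.2, ha.1, ha.2]
        have h2 : (n : ℝ) < 1 := by
          rw [← hn]
          linarith [ht.1, ht.2, ha.1, ha.2]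
        have hn0 : n = 0 := by
          have h1' : (-1 : ℤ) < n := by exact_mod_cast h1
          have h2' : n < 1 := by exact_mod_cast h2
          omega
        rw [hn0] at hn
        simp only [Int.cast_zero, sub_eq_zero] at hn
        exact htF (by simp [hn])
      simpa using fract_hasDerivAt hne
  · intro s _ t _
    refine ⟨⌊s - a⌋ - ⌊t - a⌋, ?_⟩
    simp only [Int.fract]
    push_cast
    ring
  · exact ⟨1, by norm_num, by rw [integral_fract]; norm_num⟩

lemma good_one_sub {f : ℝ → ℝ} (hf : Good f) : Good (fun t => 1 - f t) := by
  obtain ⟨hint, hcont, a, ⟨F, hF, hderiv⟩, hmod, b, hb2, hbint⟩ := hf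
  refine ⟨(intervalIntegrable_const (c := (1:ℝ))).sub hint,
    fun t ht => (continuousWithinAt_const (b := (1:ℝ))).sub (hcont t ht), -a,
    ⟨F, hF, ?_⟩, ?_, ⟨2 - b, ?_, ?_⟩⟩
  · intro t ht htF
    have := (hderiv t ht htF).const_sub 1
    push_cast
    exact this
  · intro s hs t ht
    obtain ⟨k, hk⟩ := hmod s hs t ht
    refine ⟨-k, ?_⟩
    push_cast
    push_cast at hk
    linarith
  · omega
  · rw [intervalIntegral.integral_sub (intervalIntegrable_const (c := (1:ℝ))) hint, hbint]
    push_cast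
    simp
    ring

lemma good_zero : Good 0 := by
  refine ⟨intervalIntegrable_const (c := (0:ℝ)), fun t _ => continuousWithinAt_const, 0,
    ⟨∅, by simp, ?_⟩, ?_, ⟨0, by norm_num, by simp⟩⟩
  · intro t _ _
    simpa using hasDerivAt_const t (0 : ℝ)
  · intro s _ t _
    exact ⟨0, by simp⟩

lemma good_add {f g : ℝ → ℝ} (hf : Good f) (hg : Good g) : Good (f + g) := by
  obtain ⟨hint, hcont, a, ⟨F, hF, hderiv⟩, hmod, b, hb2, hbint⟩ := hf
  obtain ⟨hint', hcont', a', ⟨F', hF', hderiv'⟩, hmod', b', hb2', hbint'⟩ := hg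
  refine ⟨hint.add hint', fun t ht => (hcont t ht).add (hcont' t ht), a + a',
    ⟨F ∪ F', ?_, ?_⟩, ?_, ⟨b + b', by omega, ?_⟩⟩
  · rw [Finset.coe_union]
    exact Set.union_subset hF hF'
  · intro t ht htF
    rw [Finset.mem_union] at htF
    push_neg at htF
    have h1 := hderiv t ht htF.1
    have h2 := hderiv' t ht htF.2
    have := h1.add h2
    push_cast
    exact this
  · intro s hs t ht
    obtain ⟨k, hk⟩ := hmod s hs t ht
    obtain ⟨k', hk'⟩ := hmod' s hs t ht
    refine ⟨k + k', ?_⟩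
    simp only [Pi.add_apply]
    push_cast
    push_cast at hk hk'
    linarith
  · have : (∫ t in (0:ℝ)..1, (f + g) t) = (∫ t in (0:ℝ)..1, f t) + ∫ t in (0:ℝ)..1, g t := by
      simp only [Pi.add_apply]
      exact intervalIntegral.integral_add hint hint'
    rw [this, hbint, hbint']
    push_cast
    ring

lemma good_neg {f : ℝ → ℝ} (hf : Good f) : Good (-f) := by
  obtain ⟨hint, hcont, a, ⟨F, hF, hderiv⟩, hmod, b, hb2, hbint⟩ := hf
  refine ⟨hint.neg, fun t ht => (hcont t ht).neg, -a, ⟨F, hF, ?_⟩, ?_, ⟨-b, by omega, ?_⟩⟩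
  · intro t ht htF
    have := (hderiv t ht htF).neg
    push_cast
    exact this
  · intro s hs t ht
    obtain ⟨k, hk⟩ := hmod s hs t ht
    refine ⟨-k, ?_⟩
    simp only [Pi.neg_apply]
    push_cast
    push_cast at hk
    linarith
  · have : (∫ t in (0:ℝ)..1, (-f) t) = -(∫ t in (0:ℝ)..1, f t) := by
      simp only [Pi.neg_apply]
      exact intervalIntegral.integral_neg
    rw [this, hbint]
    push_cast
    ring

lemma good_of_mem {f : ℝ → ℝ} (hf : f ∈ calT) : Good f := by
  induction hf using AddSubgroup.closure_induction with
  | mem x hx =>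
      obtain ⟨a, ha, h | h⟩ := hx
      · rw [h]; exact good_gen1 ha
      · rw [h]; exact good_one_sub (good_gen1 ha)
  | zero => exact good_zero
  | add x y _ _ hx hy => exact good_add hx hy
  | neg x _ hx => exact good_neg hx

theorem statement13 (f : ℝ → ℝ) (hf : f ∈ calT) :
    (∀ t ∈ Set.Ico (0:ℝ) 1, ContinuousWithinAt f (Set.Ici t) t) ∧
    ∃ a : ℤ,
      (∃ F : Finset ℝ, (F : Set ℝ) ⊆ Set.Ico (0:ℝ) 1 ∧
        ∀ t ∈ Set.Ico (0:ℝ) 1, t ∉ F → HasDerivAt f (a : ℝ) t) ∧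
      (∀ s ∈ Set.Ico (0:ℝ) 1, ∀ t ∈ Set.Ico (0:ℝ) 1,
        ∃ k : ℤ, f t - f s - (a : ℝ) * (t - s) = (k : ℝ)) ∧
      (∃ b : ℤ, (2 : ℤ) ∣ (b - a) ∧ (∫ t in (0:ℝ)..1, f t) = (b : ℝ) / 2) := by
  obtain ⟨_, hcont, rest⟩ := good_of_mem hf
  exact ⟨hcont, rest⟩
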